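/- arXiv:2510.00677 — 5 statements merged into one kernel-verified Lean document; each statement's English description precedes it below -/
import Mathlib

section
/- Let 0 < u_min ≤ u_max and L > 0. Let (u_n)_{n∈ℕ} be a sequence of functions u_n : ℝ → ℝ with u_n(x) ∈ [u_min, u_max] for every x ∈ ℝ and Lip⁻ u_n ≤ L for every n. Then there exist a subsequence (u_{n_k}) and a function u : ℝ → ℝ with u(x) ∈ [u_min, u_max] for every x and Lip⁻ u ≤ L, such that u_{n_k}(x) → u(x) for every x ∈ ℝ and ∫_{−R}^{R} |u_{n_k}(x) − u(x)| dx → 0 for every R > 0. -/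
/-!
`Lip⁻ u ≤ L` says exactly that `x ↦ u x + L * x` is monotone, so the theorem reduces to Helly's
selection theorem for monotone functions. Helly's theorem is proved by extracting a subsequence
converging on `ℚ`; the right envelope `G x = inf_{q > x} w q` of the limit `w` is monotone, the
subsequence converges to `G` at every continuity point of `G`, and a second extraction handles the
countably many discontinuities. The range bound and the one-sided Lipschitz bound pass to pointwise
limits, and since `|u_{n_k} - v| ≤ u_max - u_min`, dominated convergence upgrades pointwise
convergence to `L¹` convergence on bounded intervals.
-/

open MeasureTheory Filter Set Topology

theorem exists_subseq_tendsto_of_mem_Icc {ι : Type*} [Countable ι] (a b : ι → ℝ)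
    (f : ℕ → ι → ℝ) (hf : ∀ n i, f n i ∈ Icc (a i) (b i)) :
    ∃ φ : ℕ → ℕ, StrictMono φ ∧ ∃ g : ι → ℝ,
      ∀ i, Tendsto (fun k => f (φ k) i) atTop (𝓝 (g i)) := by
  obtain ⟨G, φ, hφ, hG⟩ := CompactSpace.tendsto_subseq
    (X := (i : ι) → Icc (a i) (b i)) fun n i => ⟨f n i, hf n i⟩
  exact ⟨φ, hφ, fun i => G i, fun i =>
    (continuous_subtype_val.tendsto _).comp (tendsto_pi_nhds.1 hG i)⟩

theorem monotone_of_tendsto_pointwise {ι α β : Type*} [Preorder α] [TopologicalSpace β]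
    [Preorder β] [OrderClosedTopology β] {l : Filter ι} [l.NeBot] {f : ι → α → β} {w : α → β}
    (hf : ∀ n, Monotone (f n)) (hw : ∀ a, Tendsto (fun n => f n a) l (𝓝 (w a))) :
    Monotone w :=
  fun a b hab => le_of_tendsto_of_tendsto' (hw a) (hw b) fun n => hf n hab

instance (x : ℝ) : Nonempty {q : ℚ // x < q} :=
  let ⟨q, hq⟩ := exists_rat_gt x
  ⟨⟨q, hq⟩⟩

noncomputable def ratRightEnvelope (w : ℚ → ℝ) (x : ℝ) : ℝ :=
  ⨅ q : {q : ℚ // x < q}, w q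

section RatRightEnvelope

variable {w : ℚ → ℝ}

theorem ratRightEnvelope_le (hw : Monotone w) {x : ℝ} {q : ℚ} (hxq : x < q) :
    ratRightEnvelope w x ≤ w q := by
  obtain ⟨p, hpx⟩ := exists_rat_lt x
  have hbdd : BddBelow (range fun q : {q : ℚ // x < q} => w q) :=
    ⟨w p, forall_mem_range.2 fun q => hw (Rat.cast_lt.1 (hpx.trans q.2)).le⟩
  exact ciInf_le hbdd ⟨q, hxq⟩

theorem monotone_ratRightEnvelope (hw : Monotone w) : Monotone (ratRightEnvelope w) :=
  fun _ _ hxy => le_ciInf fun q => ratRightEnvelope_le hw (hxy.trans_lt q.2)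

/-- At a continuity point `x`, each `f n x` is squeezed between `f n p` and `f n q` for rationals
`p < x < q` whose limits `w p`, `w q` are close to `ratRightEnvelope w x`. -/
theorem tendsto_ratRightEnvelope_of_continuousAt {f : ℕ → ℝ → ℝ} (hf : ∀ n, Monotone (f n))
    (hw : ∀ q : ℚ, Tendsto (fun n => f n q) atTop (𝓝 (w q))) {x : ℝ}
    (hx : ContinuousAt (ratRightEnvelope w) x) :
    Tendsto (fun n => f n x) atTop (𝓝 (ratRightEnvelope w x)) := by
  have hwmono := monotone_of_tendsto_pointwise (fun n => (hf n).comp Rat.cast_mono) hw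
  refine tendsto_order.2 ⟨fun c hc => ?_, fun c hc => ?_⟩
  · obtain ⟨z, hcz, hzx⟩ := ((hx.eventually_const_lt hc).filter_mono nhdsWithin_le_nhds
      |>.and (self_mem_nhdsWithin (s := Iio x))).exists
    obtain ⟨p, hzp, hpx⟩ := exists_rat_btwn (show z < x from hzx)
    filter_upwards [(hw p).eventually_const_lt
      (hcz.trans_le (ratRightEnvelope_le hwmono hzp))] with n hn
    exact hn.trans_le (hf n hpx.le)
  · obtain ⟨q, hq⟩ := exists_lt_of_ciInf_lt hc
    filter_upwards [(hw q).eventually_lt_const hq] with n hn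
    exact (hf n q.2.le).trans_lt hn

end RatRightEnvelope

/-- **Helly's selection theorem**, pointwise form. -/
theorem exists_subseq_tendsto_of_monotone {f : ℕ → ℝ → ℝ} (hf : ∀ n, Monotone (f n))
    (a b : ℝ → ℝ) (hab : ∀ n x, f n x ∈ Icc (a x) (b x)) :
    ∃ φ : ℕ → ℕ, StrictMono φ ∧ ∃ g : ℝ → ℝ,
      ∀ x, Tendsto (fun k => f (φ k) x) atTop (𝓝 (g x)) := by
  classical
  obtain ⟨φ₀, hφ₀, w, hw⟩ := exists_subseq_tendsto_of_mem_Icc (fun q : ℚ => a q)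
    (fun q => b q) (fun n q => f n q) fun n q => hab n q
  set G := ratRightEnvelope w
  have hG : Monotone G := monotone_ratRightEnvelope <|
    monotone_of_tendsto_pointwise (fun k => (hf (φ₀ k)).comp Rat.cast_mono) hw
  have := hG.countable_not_continuousAt.to_subtype
  obtain ⟨φ₁, hφ₁, z, hz⟩ := exists_subseq_tendsto_of_mem_Icc
    (fun x : {x | ¬ContinuousAt G x} => a x) (fun x => b x)
    (fun k x => f (φ₀ k) x) fun k x => hab _ _
  refine ⟨φ₀ ∘ φ₁, hφ₀.comp hφ₁,
    fun x => if hx : ContinuousAt G x then G x else z ⟨x, hx⟩, fun x => ?_⟩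
  by_cases hx : ContinuousAt G x
  · simpa [hx, Function.comp_def] using
      (tendsto_ratRightEnvelope_of_continuousAt (fun k => hf (φ₀ k)) hw hx).comp
        hφ₁.tendsto_atTop
  · simpa [hx] using hz ⟨x, hx⟩

theorem tendsto_intervalIntegral_abs_sub_of_tendsto {F : ℕ → ℝ → ℝ} {v : ℝ → ℝ}
    (hF : ∀ k, Measurable (F k)) {C : ℝ} (hC : ∀ k x, |F k x - v x| ≤ C)
    (hlim : ∀ x, Tendsto (fun k => F k x) atTop (𝓝 (v x))) (a b : ℝ) :
    Tendsto (fun k => ∫ x in a..b, |F k x - v x|) atTop (𝓝 0) := by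
  have hv : Measurable v := measurable_of_tendsto_metrizable' atTop hF (tendsto_pi_nhds.2 hlim)
  have := intervalIntegral.tendsto_integral_filter_of_dominated_convergence (μ := volume)
    (a := a) (b := b) (bound := fun _ => C) (f := fun _ => 0)
    (Eventually.of_forall fun k => ((hF k).sub hv).abs.aestronglyMeasurable.restrict)
    (Eventually.of_forall fun k => ae_of_all _ fun x _ => by
      rw [Real.norm_eq_abs, abs_abs]; exact hC k x)
    intervalIntegrable_const
    (ae_of_all _ fun x _ => by simpa using ((hlim x).sub_const (v x)).abs)
  simpa using this

theorem monotone_add_mul_of_sub_le_mul_sub {u : ℝ → ℝ} {L : ℝ}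
    (hu : ∀ x y, x < y → u x - u y ≤ L * (y - x)) : Monotone fun x => u x + L * x := by
  intro x y hxy
  rcases hxy.eq_or_lt with rfl | hlt
  · rfl
  · linarith [hu x y hlt]

theorem stmt1_general (umin umax L : ℝ)
    (u : ℕ → ℝ → ℝ)
    (hbound : ∀ n x, u n x ∈ Set.Icc umin umax)
    (hlip : ∀ n x y, x < y → u n x - u n y ≤ L * (y - x)) :
    ∃ φ : ℕ → ℕ, StrictMono φ ∧ ∃ v : ℝ → ℝ,
      (∀ x, v x ∈ Set.Icc umin umax) ∧
      (∀ x y, x < y → v x - v y ≤ L * (y - x)) ∧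
      (∀ x, Tendsto (fun k => u (φ k) x) atTop (nhds (v x))) ∧
      (∀ R > 0, Tendsto (fun k => ∫ x in (-R)..R, |u (φ k) x - v x|) atTop (nhds 0)) := by
  have hmono n := monotone_add_mul_of_sub_le_mul_sub (hlip n)
  obtain ⟨φ, hφ, g, hg⟩ := exists_subseq_tendsto_of_monotone hmono
    (fun x => umin + L * x) (fun x => umax + L * x) fun n x =>
      ⟨by linarith [(hbound n x).1], by linarith [(hbound n x).2]⟩
  set v := fun x => g x - L * x
  have hconv x : Tendsto (fun k => u (φ k) x) atTop (𝓝 (v x)) := by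
    simpa using (hg x).sub_const (L * x)
  have hv x : v x ∈ Icc umin umax :=
    isClosed_Icc.mem_of_tendsto (hconv x) (Eventually.of_forall fun k => hbound _ x)
  have hvlip x y (hxy : x < y) : v x - v y ≤ L * (y - x) :=
    le_of_tendsto ((hconv x).sub (hconv y)) (Eventually.of_forall fun k => hlip _ x y hxy)
  have hmeas n : Measurable (u n) := by
    simpa [Pi.sub_def] using (hmono n).measurable.sub (measurable_id.const_mul L)
  have hdiff k x : |u (φ k) x - v x| ≤ umax - umin :=
    (Real.dist_eq _ _).symm.trans_le (Real.dist_le_of_mem_Icc (hbound _ x) (hv x))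
  exact ⟨φ, hφ, v, hv, hvlip, hconv, fun R _ =>
    tendsto_intervalIntegral_abs_sub_of_tendsto (fun k => hmeas (φ k)) hdiff hconv _ _⟩

/-- Compactness in `L¹_loc` of the admissible set
`{u : u(x) ∈ [u_min, u_max], Lip⁻ u ≤ L}`: every sequence admits a subsequence
converging pointwise and in `L¹` on every compact interval to a limit in the set. -/
theorem stmt1 (umin umax L : ℝ) (humin : 0 < umin) (h2 : umin ≤ umax) (hL : 0 < L)
    (u : ℕ → ℝ → ℝ)
    (hbound : ∀ n x, u n x ∈ Set.Icc umin umax)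
    (hlip : ∀ n x y, x < y → u n x - u n y ≤ L * (y - x)) :
    ∃ φ : ℕ → ℕ, StrictMono φ ∧ ∃ v : ℝ → ℝ,
      (∀ x, v x ∈ Set.Icc umin umax) ∧
      (∀ x y, x < y → v x - v y ≤ L * (y - x)) ∧
      (∀ x, Tendsto (fun k => u (φ k) x) atTop (nhds (v x))) ∧
      (∀ R > 0, Tendsto (fun k => ∫ x in (-R)..R, |u (φ k) x - v x|) atTop (nhds 0)) :=
  stmt1_general umin umax L u hbound hlip
end

section
/- Let H > 0, u_max > 0, M ≥ 0, and let u : ℝ → ℝ satisfy 0 ≤ u(x) ≤ u_max for every x ∈ ℝ and TV(u) ≤ M. Define w : ℝ → ℝ by w(x) = (1/H) ∫_x^{+∞} u(y) e^{(x−y)/H} dy. Then for every R > 0 one has ∫_{−R}^{R} |w(x) − u(x)| dx ≤ H · M. -/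
open MeasureTheory Filter
open Set Real

lemma aux_shift (g : ℝ → ℝ) (x : ℝ) :
    (∫ t in Set.Ioi (0:ℝ), g (x + t)) = ∫ y in Set.Ioi x, g y := by
  rw [← integral_indicator measurableSet_Ioi, ← integral_indicator measurableSet_Ioi]
  rw [← integral_add_left_eq_self (μ := volume) (fun y => (Set.Ioi x).indicator g y) x]
  congr 1
  ext t
  by_cases ht : 0 < t
  · simp [Set.indicator_of_mem, ht, lt_add_iff_pos_right]
  · simp [Set.indicator_of_notMem, ht, Set.mem_Ioi, lt_add_iff_pos_right]

lemma aux_kernel {H : ℝ} (hH : 0 < H) :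
    (∫ t in Set.Ioi (0:ℝ), Real.exp (-t / H)) = H := by
  have : (fun t : ℝ => Real.exp (-t / H)) = fun t => Real.exp (-(H⁻¹ * t)) := by
    funext t; rw [neg_div, div_eq_inv_mul, mul_comm]
  rw [this]
  rw [integral_comp_mul_left_Ioi (fun s => Real.exp (-s)) 0 (inv_pos.2 hH)]
  simp [integral_exp_neg_Ioi, integral_exp_Iic_zero, Real.exp_zero, inv_inv, smul_eq_mul]

lemma aux_texp {H : ℝ} (hH : 0 < H) :
    (∫ t in Set.Ioi (0:ℝ), t * Real.exp (-t / H)) = H ^ 2 := by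
  have h := Real.integral_rpow_mul_exp_neg_mul_Ioi (a := 2) (r := H⁻¹) (by norm_num) (inv_pos.2 hH)
  have e1 : ∀ t ∈ Set.Ioi (0:ℝ), t ^ ((2:ℝ) - 1) * Real.exp (-(H⁻¹ * t)) = t * Real.exp (-t / H) := by
    intro t ht
    rw [neg_div, div_eq_inv_mul]
    norm_num
  rw [setIntegral_congr_fun measurableSet_Ioi e1] at h
  rw [h]
  have : Real.Gamma 2 = 1 := by
    have h2 := Real.Gamma_nat_eq_factorial 1
    norm_num at h2
    convert h2 using 2
    norm_num
  rw [this, one_div, inv_inv, mul_one]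
  rw [show ((2:ℝ) = ((2:ℕ):ℝ)) by norm_num, Real.rpow_natCast]

/-- The convolution of `u` with the rescaled exponential kernel
`η_H(x) = (1/H) e^{x/H} χ_{(-∞,0]}(x)`, namely
`w(x) = (1/H) ∫_x^∞ u(y) e^{(x-y)/H} dy`. -/
noncomputable def expConv (H : ℝ) (u : ℝ → ℝ) (x : ℝ) : ℝ :=
  (1 / H) * ∫ y in Set.Ioi x, u y * Real.exp ((x - y) / H)

set_option maxHeartbeats 2000000 in
/-- If `0 ≤ u ≤ u_max` everywhere and `TV(u) ≤ M`, then the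
exponential convolution `w = u * η_H` satisfies `∫_{-R}^{R} |w - u| ≤ H·M`
for every `R > 0`. -/
theorem stmt4 (H umax M : ℝ) (hH : 0 < H) (humax : 0 < umax) (hM : 0 ≤ M)
    (u : ℝ → ℝ) (hbound : ∀ x, 0 ≤ u x ∧ u x ≤ umax)
    (hTV : eVariationOn u Set.univ ≤ ENNReal.ofReal M) :
    ∀ R > 0, (∫ x in (-R)..R, |expConv H u x - u x|) ≤ H * M := by
  intro R hR
  have hRR : (-R : ℝ) ≤ R := by linarith
  -- measurability of u
  have hu_meas : Measurable u := by
    have hbv : LocallyBoundedVariationOn u Set.univ := by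
      apply BoundedVariationOn.locallyBoundedVariationOn
      exact ne_top_of_le_ne_top ENNReal.ofReal_ne_top hTV
    obtain ⟨p, q, hp, hq, hpq⟩ := hbv.exists_monotoneOn_sub_monotoneOn
    rw [monotoneOn_univ] at hp hq
    have : u = fun x => p x - q x := by funext x; rw [hpq]; rfl
    rw [this]; exact (hp.measurable.sub hq.measurable)
  -- kernel in t variable
  set k : ℝ → ℝ := fun t => Real.exp (-t / H) with hk_def
  have hk_pos : ∀ t, 0 < k t := fun t => Real.exp_pos _
  have hk_int : IntegrableOn k (Set.Ioi 0) := by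
    have : k = fun t => Real.exp (-H⁻¹ * t) := by
      funext t; show Real.exp (-t / H) = _; rw [neg_div, div_eq_inv_mul, ← neg_mul]
    rw [this]; exact exp_neg_integrableOn_Ioi 0 (inv_pos.2 hH)
  -- facts about u bounds
  have hub : ∀ x y : ℝ, |u y - u x| ≤ 2 * umax := by
    intro x y
    have h1 := hbound x; have h2 := hbound y
    rw [abs_sub_le_iff]; constructor <;> linarith
  -- the variation function V
  have hfin : ∀ s : Set ℝ, eVariationOn u s ≠ ⊤ := fun s =>
    ne_top_of_le_ne_top ENNReal.ofReal_ne_top ((eVariationOn.mono u (Set.subset_univ s)).trans hTV)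
  set V : ℝ → ℝ := fun x => (eVariationOn u (Set.Iic x)).toReal with hV_def
  have hV0 : ∀ x, 0 ≤ V x := fun x => ENNReal.toReal_nonneg
  have hVM : ∀ x, V x ≤ M := by
    intro x
    have := (eVariationOn.mono u (Set.subset_univ (Set.Iic x))).trans hTV
    exact ENNReal.toReal_le_of_le_ofReal hM this
  have hVmono : Monotone V := by
    intro x y hxy
    exact ENNReal.toReal_mono (hfin _) (eVariationOn.mono u (Set.Iic_subset_Iic.2 hxy))
  have hkey : ∀ x y : ℝ, x ≤ y → |u y - u x| ≤ V y - V x := by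
    intro x y hxy
    have hsplit : eVariationOn u (Set.Iic x) + eVariationOn u (Set.Icc x y)
        = eVariationOn u (Set.Iic y) := by
      rw [← eVariationOn.union u (isGreatest_Iic (a := x)) (isLeast_Icc hxy),
          Set.Iic_union_Icc_eq_Iic hxy]
    have hVy : V y = V x + (eVariationOn u (Set.Icc x y)).toReal := by
      rw [hV_def]
      simp only
      rw [← hsplit, ENNReal.toReal_add (hfin _) (hfin _)]
    have hd : |u y - u x| = (edist (u y) (u x)).toReal := by
      rw [edist_dist, Real.dist_eq, ENNReal.toReal_ofReal (abs_nonneg _)]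
    rw [hd, hVy]
    have hle : edist (u y) (u x) ≤ eVariationOn u (Set.Icc x y) :=
      eVariationOn.edist_le u (Set.right_mem_Icc.2 hxy) (Set.left_mem_Icc.2 hxy)
    have := ENNReal.toReal_mono (hfin _) hle
    linarith
  have hV_int : ∀ a b : ℝ, IntervalIntegrable V volume a b := fun a b =>
    hVmono.intervalIntegrable
  -- Step A : shift bound
  have hA : ∀ t : ℝ, 0 ≤ t → (∫ x in Set.Ioc (-R) R, |u (x + t) - u x|) ≤ t * M := by
    intro t ht
    have habs_int : IntervalIntegrable (fun x => |u (x + t) - u x|) volume (-R) R := by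
      rw [intervalIntegrable_iff]
      apply Measure.integrableOn_of_bounded (M := 2 * umax)
      · exact (measure_Ioc_lt_top).ne
      · exact (((hu_meas.comp (measurable_id.add_const t)).sub hu_meas).abs).aestronglyMeasurable
      · exact ae_of_all _ fun x => by rw [Real.norm_eq_abs, abs_abs]; exact hub x (x + t)
    have hVt_int : IntervalIntegrable (fun x => V (x + t)) volume (-R) R := by
      have := (hV_int (-R + t) (R + t)).comp_add_right t
      simpa using this
    have step1 : (∫ x in (-R)..R, |u (x + t) - u x|) ≤ ∫ x in (-R)..R, (V (x + t) - V x) := by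
      apply intervalIntegral.integral_mono_on hRR habs_int (hVt_int.sub (hV_int _ _))
      intro x _
      exact hkey x (x + t) (by linarith)
    have step2 : (∫ x in (-R)..R, (V (x + t) - V x))
        = (∫ x in (-R + t)..(R + t), V x) - ∫ x in (-R)..R, V x := by
      rw [intervalIntegral.integral_sub hVt_int (hV_int _ _),
          intervalIntegral.integral_comp_add_right V t]
    have step3 : (∫ x in (-R + t)..(R + t), V x) - (∫ x in (-R)..R, V x)
        = (∫ x in R..(R + t), V x) - ∫ x in (-R)..(-R + t), V x := by
      have e1 : (∫ x in (-R)..(-R + t), V x) + (∫ x in (-R + t)..(R + t), V x)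
          = ∫ x in (-R)..(R + t), V x :=
        intervalIntegral.integral_add_adjacent_intervals (hV_int _ _) (hV_int _ _)
      have e2 : (∫ x in (-R)..R, V x) + (∫ x in R..(R + t), V x)
          = ∫ x in (-R)..(R + t), V x :=
        intervalIntegral.integral_add_adjacent_intervals (hV_int _ _) (hV_int _ _)
      linarith
    have b1 : (∫ x in R..(R + t), V x) ≤ t * M := by
      have : (∫ x in R..(R + t), V x) ≤ ∫ _x in R..(R + t), M := by
        apply intervalIntegral.integral_mono_on (by linarith) (hV_int _ _)
          intervalIntegrable_const
        intro x _; exact hVM x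
      simpa using this.trans_eq (by rw [intervalIntegral.integral_const, smul_eq_mul]; ring)
    have b2 : 0 ≤ ∫ x in (-R)..(-R + t), V x :=
      intervalIntegral.integral_nonneg (by linarith) fun x _ => hV0 x
    have : (∫ x in (-R)..R, |u (x + t) - u x|) ≤ t * M := by
      rw [step2, step3] at step1; linarith
    rwa [intervalIntegral.integral_of_le hRR] at this
  -- kernel integrability on Ioi x
  have hker_int : ∀ x : ℝ, IntegrableOn (fun y => Real.exp ((x - y) / H)) (Set.Ioi x) := by
    intro x
    have e : (fun y => Real.exp ((x - y) / H))
        = fun y => Real.exp (x / H) * Real.exp (-H⁻¹ * y) := by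
      funext y
      rw [← Real.exp_add]
      congr 1
      field_simp
      ring
    rw [e]
    exact (exp_neg_integrableOn_Ioi x (inv_pos.2 hH)).const_mul _
  have hker_eq : ∀ x : ℝ, (∫ y in Set.Ioi x, Real.exp ((x - y) / H)) = H := by
    intro x
    calc (∫ y in Set.Ioi x, Real.exp ((x - y) / H))
        = ∫ t in Set.Ioi (0:ℝ), Real.exp ((x - (x + t)) / H) :=
          (aux_shift (fun y => Real.exp ((x - y) / H)) x).symm
      _ = ∫ t in Set.Ioi (0:ℝ), k t := by
          apply setIntegral_congr_fun measurableSet_Ioi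
          intro t _
          simp only
          rw [show x - (x + t) = -t from by ring]
      _ = H := aux_kernel hH
  have hker_meas : ∀ x : ℝ, Measurable (fun y => Real.exp ((x - y) / H)) := fun x =>
    Real.measurable_exp.comp ((measurable_const.sub measurable_id).div_const H)
  have hu_int : ∀ x : ℝ, IntegrableOn (fun y => u y * Real.exp ((x - y) / H)) (Set.Ioi x) := by
    intro x
    apply Integrable.mono' ((hker_int x).const_mul umax)
    · exact (hu_meas.mul (hker_meas x)).aestronglyMeasurable
    · refine ae_of_all _ fun y => ?_
      rw [Real.norm_eq_abs, abs_mul, abs_of_nonneg (hbound y).1,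
        abs_of_nonneg (Real.exp_pos _).le]
      exact mul_le_mul_of_nonneg_right (hbound y).2 (Real.exp_pos _).le
  -- pointwise identity and bound
  have hdiff : ∀ x : ℝ, expConv H u x - u x
      = (1 / H) * ∫ y in Set.Ioi x, (u y - u x) * Real.exp ((x - y) / H) := by
    intro x
    have e : (fun y => (u y - u x) * Real.exp ((x - y) / H))
        = fun y => u y * Real.exp ((x - y) / H) - u x * Real.exp ((x - y) / H) := by
      funext y; ring
    rw [e, integral_sub (hu_int x) ((hker_int x).const_mul (u x)), integral_const_mul,
      hker_eq x, expConv]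
    field_simp
  have hpt : ∀ x : ℝ, |expConv H u x - u x|
      ≤ (1 / H) * ∫ t in Set.Ioi (0:ℝ), |u (x + t) - u x| * k t := by
    intro x
    rw [hdiff x, abs_mul, abs_of_nonneg (by positivity : (0:ℝ) ≤ 1 / H)]
    apply mul_le_mul_of_nonneg_left _ (by positivity)
    calc |∫ y in Set.Ioi x, (u y - u x) * Real.exp ((x - y) / H)|
        ≤ ∫ y in Set.Ioi x, |u y - u x| * Real.exp ((x - y) / H) := by
          simpa [Real.norm_eq_abs] using
            norm_integral_le_integral_norm (fun y => (u y - u x) * Real.exp ((x - y) / H))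
              (μ := volume.restrict (Set.Ioi x))
      _ = ∫ t in Set.Ioi (0:ℝ), |u (x + t) - u x| * k t := by
          rw [← aux_shift (fun y => |u y - u x| * Real.exp ((x - y) / H)) x]
          apply setIntegral_congr_fun measurableSet_Ioi
          intro t _
          simp only
          rw [show x - (x + t) = -t from by ring]
  -- measurability of expConv
  set h₀ : ℝ → ℝ := fun y => u y * Real.exp (-H⁻¹ * y) with hh₀_def
  have hh₀_nonneg : ∀ y, 0 ≤ h₀ y := fun y => mul_nonneg (hbound y).1 (Real.exp_pos _).le
  have hh₀_int : ∀ x : ℝ, IntegrableOn h₀ (Set.Ioi x) := by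
    intro x
    apply Integrable.mono' ((exp_neg_integrableOn_Ioi x (inv_pos.2 hH)).const_mul umax)
    · exact (hu_meas.mul (Real.measurable_exp.comp (measurable_id.const_mul _))).aestronglyMeasurable
    · refine ae_of_all _ fun y => ?_
      rw [Real.norm_eq_abs, abs_mul, abs_of_nonneg (hbound y).1,
        abs_of_nonneg (Real.exp_pos _).le]
      exact mul_le_mul_of_nonneg_right (hbound y).2 (Real.exp_pos _).le
  set G : ℝ → ℝ := fun x => ∫ y in Set.Ioi x, h₀ y with hG_def
  have hG_anti : Antitone G := by
    intro x x' hxx'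
    exact setIntegral_mono_set (hh₀_int x) (ae_of_all _ hh₀_nonneg)
      (HasSubset.Subset.eventuallyLE (Set.Ioi_subset_Ioi hxx'))
  have hw_eq : expConv H u = fun x => (1 / H) * (Real.exp (x / H) * G x) := by
    funext x
    rw [expConv]
    congr 1
    rw [hG_def]
    simp only
    rw [← integral_const_mul]
    apply setIntegral_congr_fun measurableSet_Ioi
    intro y _
    simp only
    show u y * Real.exp ((x - y) / H) = Real.exp (x / H) * (u y * Real.exp (-H⁻¹ * y))
    rw [mul_comm (Real.exp (x / H)), mul_assoc, ← Real.exp_add,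
      show (x - y) / H = -H⁻¹ * y + x / H from by field_simp; ring]
  have hw_meas : Measurable (expConv H u) := by
    rw [hw_eq]
    exact (((Real.measurable_exp.comp (measurable_id.div_const H)).mul
      hG_anti.measurable).const_mul (1 / H))
  have hw_bound : ∀ x : ℝ, |expConv H u x| ≤ umax := by
    intro x
    have h0 : 0 ≤ expConv H u x := by
      rw [expConv]
      apply mul_nonneg (by positivity)
      exact setIntegral_nonneg measurableSet_Ioi fun y _ =>
        mul_nonneg (hbound y).1 (Real.exp_pos _).le
    have h1 : expConv H u x ≤ umax := by
      rw [expConv]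
      have : (∫ y in Set.Ioi x, u y * Real.exp ((x - y) / H))
          ≤ ∫ y in Set.Ioi x, umax * Real.exp ((x - y) / H) := by
        apply integral_mono (hu_int x) ((hker_int x).const_mul umax)
        intro y
        exact mul_le_mul_of_nonneg_right (hbound y).2 (Real.exp_pos _).le
      rw [integral_const_mul, hker_eq x] at this
      calc (1 / H) * (∫ y in Set.Ioi x, u y * Real.exp ((x - y) / H))
          ≤ (1 / H) * (umax * H) := mul_le_mul_of_nonneg_left this (by positivity)
        _ = umax := by field_simp
    rw [abs_of_nonneg h0]; exact h1
  -- the double-variable function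
  set F : ℝ × ℝ → ℝ := fun p => |u (p.1 + p.2) - u p.1| * k p.2 with hF_def
  have hF_meas : StronglyMeasurable F := by
    apply Measurable.stronglyMeasurable
    exact (((hu_meas.comp (measurable_fst.add measurable_snd)).sub
      (hu_meas.comp measurable_fst)).abs).mul
      (Real.measurable_exp.comp ((measurable_snd.neg).div_const H))
  have hF_nonneg : ∀ p : ℝ × ℝ, 0 ≤ F p := fun p =>
    mul_nonneg (abs_nonneg _) (Real.exp_pos _).le
  have hF_le : ∀ p : ℝ × ℝ, F p ≤ 2 * umax * k p.2 := fun p =>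
    mul_le_mul_of_nonneg_right (hub p.1 (p.1 + p.2)) (Real.exp_pos _).le
  have hFx_int : ∀ x : ℝ, IntegrableOn (fun t => F (x, t)) (Set.Ioi 0) := by
    intro x
    apply Integrable.mono' (hk_int.const_mul (2 * umax))
    · exact (hF_meas.comp_measurable (measurable_const.prodMk measurable_id)).aestronglyMeasurable
    · exact ae_of_all _ fun t => by
        rw [Real.norm_eq_abs, abs_of_nonneg (hF_nonneg _)]; exact hF_le _
  set Φ : ℝ → ℝ := fun x => ∫ t in Set.Ioi (0:ℝ), F (x, t) with hΦ_def
  have hΦ_meas : StronglyMeasurable Φ := hF_meas.integral_prod_right'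
  have hΦ_nonneg : ∀ x, 0 ≤ Φ x := fun x =>
    setIntegral_nonneg measurableSet_Ioi fun t _ => hF_nonneg _
  have hΦ_bound : ∀ x, Φ x ≤ 2 * umax * H := by
    intro x
    have : Φ x ≤ ∫ t in Set.Ioi (0:ℝ), 2 * umax * k t := by
      apply integral_mono (hFx_int x) (hk_int.const_mul (2 * umax))
      intro t
      exact hF_le (x, t)
    rwa [integral_const_mul, aux_kernel hH] at this
  -- integrabilities on [-R, R]
  have hμfin : volume (Set.Ioc (-R) R) < ⊤ := measure_Ioc_lt_top
  have hwu_int : IntegrableOn (fun x => |expConv H u x - u x|) (Set.Ioc (-R) R) := by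
    apply Measure.integrableOn_of_bounded (M := 2 * umax) hμfin.ne
    · exact ((hw_meas.sub hu_meas).abs).aestronglyMeasurable
    · refine ae_of_all _ fun x => ?_
      rw [Real.norm_eq_abs, abs_abs]
      calc |expConv H u x - u x| ≤ |expConv H u x| + |u x| := abs_sub _ _
        _ ≤ umax + umax := add_le_add (hw_bound x)
            (by rw [abs_of_nonneg (hbound x).1]; exact (hbound x).2)
        _ = 2 * umax := by ring
  have hΦ_int : IntegrableOn Φ (Set.Ioc (-R) R) := by
    apply Measure.integrableOn_of_bounded (M := 2 * umax * H) hμfin.ne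
    · exact hΦ_meas.aestronglyMeasurable
    · exact ae_of_all _ fun x => by
        rw [Real.norm_eq_abs, abs_of_nonneg (hΦ_nonneg x)]; exact hΦ_bound x
  -- Fubini
  set μ := volume.restrict (Set.Ioc (-R) R) with hμ_def
  set ν := volume.restrict (Set.Ioi (0:ℝ)) with hν_def
  haveI hμ_fin : IsFiniteMeasure μ := by
    constructor
    rw [hμ_def, Measure.restrict_apply_univ]
    exact hμfin
  have hF_prod_int : Integrable F (μ.prod ν) := by
    apply Integrable.mono' ((integrable_const (2 * umax)).mul_prod hk_int)
    · exact hF_meas.aestronglyMeasurable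
    · exact ae_of_all _ fun p => by
        rw [Real.norm_eq_abs, abs_of_nonneg (hF_nonneg p)]; exact hF_le p
  have hswap : (∫ x, ∫ t, F (x, t) ∂ν ∂μ) = ∫ t, ∫ x, F (x, t) ∂μ ∂ν :=
    integral_integral_swap hF_prod_int
  -- integrability of inner integrals in t
  have hinner_int : Integrable (fun t => ∫ x, F (x, t) ∂μ) ν :=
    hF_prod_int.integral_prod_right
  have htk_int : IntegrableOn (fun t => t * k t) (Set.Ioi 0) := by
    have h := integrableOn_rpow_mul_exp_neg_mul_rpow (s := 1) (p := 1) (b := H⁻¹)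
      (by norm_num) (by norm_num) (inv_pos.2 hH)
    apply h.congr_fun _ measurableSet_Ioi
    intro t ht
    simp only
    rw [Real.rpow_one]
    show t * Real.exp (-H⁻¹ * t) = t * Real.exp (-t / H)
    rw [neg_div, div_eq_inv_mul, neg_mul]
  have hrhs_int : IntegrableOn (fun t => t * M * k t) (Set.Ioi 0) := by
    have e : (fun t => t * M * k t) = fun t => M * (t * k t) := by funext t; ring
    rw [e]
    exact htk_int.const_mul M
  -- inner bound for each t > 0
  have hinner_le : ∀ t ∈ Set.Ioi (0:ℝ), (∫ x, F (x, t) ∂μ) ≤ t * M * k t := by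
    intro t ht
    have e : (∫ x, F (x, t) ∂μ) = (∫ x in Set.Ioc (-R) R, |u (x + t) - u x|) * k t := by
      rw [hμ_def, ← integral_mul_const]
    rw [e]
    exact mul_le_mul_of_nonneg_right (hA t (le_of_lt ht)) (Real.exp_pos _).le
  -- final chain
  calc (∫ x in (-R)..R, |expConv H u x - u x|)
      = ∫ x in Set.Ioc (-R) R, |expConv H u x - u x| :=
        intervalIntegral.integral_of_le hRR
    _ ≤ ∫ x in Set.Ioc (-R) R, (1 / H) * Φ x := by
        apply setIntegral_mono_on hwu_int (hΦ_int.const_mul (1 / H)) measurableSet_Ioc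
        intro x _
        exact hpt x
    _ = (1 / H) * ∫ x, Φ x ∂μ := integral_const_mul _ _
    _ = (1 / H) * ∫ t, ∫ x, F (x, t) ∂μ ∂ν := by rw [← hswap]
    _ ≤ (1 / H) * ∫ t in Set.Ioi (0:ℝ), t * M * k t := by
        apply mul_le_mul_of_nonneg_left _ (by positivity)
        exact setIntegral_mono_on hinner_int hrhs_int measurableSet_Ioi hinner_le
    _ = (1 / H) * (M * H ^ 2) := by
        congr 1
        have e : (fun t => t * M * k t) = fun t => M * (t * k t) := by funext t; ring
        rw [e, integral_const_mul, aux_texp hH]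
    _ = H * M := by field_simp
end

section
/- Let Δx > 0 and 0 < H ≤ Δx, and let η : ℝ → ℝ be a function that is C² and non-decreasing on [−1,0] with η(−1) = 0 and ∫_{−1}^0 η(x) dx = 1, and η = 0 outside [−1,0]; set η_H(x) = η(x/H)/H and N_H = ⌈H/Δx⌉. Then N_H = 1, and for every bounded grid function (f_j)_{j∈ℤ} the discrete convolution (f *_Δ η_H)_j := ( Σ_{i=0}^{N_H−1} f_{j+i} · η_H(−iΔx) ) / ( Σ_{i=0}^{N_H−1} η_H(−iΔx) ) satisfies (f *_Δ η_H)_j = f_j for every j ∈ ℤ. -/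
/-! With `H ≤ Δx` the stencil of the discrete convolution has a single node, `i = 0`, so the
quotient is `f_j η_H(0) / η_H(0)`. It remains to see `η(0) ≠ 0`: a non-decreasing kernel with
`η(-1) = 0 = η(0)` vanishes on `[-1, 0]`, contradicting `∫ η = 1`. -/

open Set

theorem Nat.ceil_div_eq_one_of_le {K : Type*} [Field K] [LinearOrder K] [IsStrictOrderedRing K]
    [FloorSemiring K] {a b : K} (ha : 0 < a) (hb : 0 < b) (hab : a ≤ b) :
    ⌈a / b⌉₊ = 1 :=
  (ceil_eq_iff one_ne_zero).2
    ⟨by simpa using _root_.div_pos ha hb, by simpa using (_root_.div_le_one hb).2 hab⟩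

theorem MonotoneOn.eqOn_zero_of_left_of_right {α β : Type*} [Preorder α] [PartialOrder β]
    [Zero β] {η : α → β} {a b : α} (hmono : MonotoneOn η (Icc a b)) (ha : η a = 0)
    (hb : η b = 0) : EqOn η 0 (Icc a b) := by
  intro x hx
  have hab : a ≤ b := hx.1.trans hx.2
  have hax : η a ≤ η x := hmono (left_mem_Icc.2 hab) hx hx.1
  have hxb : η x ≤ η b := hmono hx (right_mem_Icc.2 hab) hx.2
  rw [ha] at hax
  rw [hb] at hxb
  exact le_antisymm hxb hax

theorem MonotoneOn.apply_right_ne_zero_of_integral_ne_zero {η : ℝ → ℝ} {a b : ℝ}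
    (hab : a ≤ b) (hmono : MonotoneOn η (Icc a b)) (ha : η a = 0) (hint : ∫ x in a..b, η x ≠ 0) :
    η b ≠ 0 := by
  intro hb
  apply hint
  have hzero := hmono.eqOn_zero_of_left_of_right ha hb
  rw [intervalIntegral.integral_congr (g := 0) (by rwa [uIcc_of_le hab])]
  simp

theorem stmt9_general (dx H : ℝ) (hdx : 0 < dx) (hH : 0 < H) (hHdx : H ≤ dx)
    (η : ℝ → ℝ)
    (hmono : MonotoneOn η (Set.Icc (-1 : ℝ) 0))
    (hη1 : η (-1) = 0)
    (hint : (∫ x in (-1 : ℝ)..0, η x) = 1) :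
    ⌈H / dx⌉₊ = 1 ∧
    ∀ f : ℤ → ℝ, (∃ C, ∀ j, |f j| ≤ C) → ∀ j : ℤ,
      (∑ i ∈ Finset.range ⌈H / dx⌉₊, f (j + (i : ℤ)) * (η ((-(i : ℝ) * dx) / H) / H)) /
        (∑ i ∈ Finset.range ⌈H / dx⌉₊, η ((-(i : ℝ) * dx) / H) / H) = f j := by
  have hceil : ⌈H / dx⌉₊ = 1 := Nat.ceil_div_eq_one_of_le hH hdx hHdx
  have hη0 : η 0 ≠ 0 := hmono.apply_right_ne_zero_of_integral_ne_zero (by norm_num) hη1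
    (by rw [hint]; exact one_ne_zero)
  refine ⟨hceil, fun f _ j => ?_⟩
  simp only [hceil, Finset.sum_range_one, Nat.cast_zero, neg_zero, zero_mul, zero_div,
    add_zero]
  exact mul_div_cancel_right₀ _ (div_ne_zero hη0 hH.ne')

/-- If `0 < H ≤ Δx`, then `N_H = ⌈H/Δx⌉ = 1` and the discrete
convolution with the rescaled kernel `η_H(x) = η(x/H)/H`,
`(f *_Δ η_H)_j = (Σ_{i=0}^{N_H-1} f_{j+i} η_H(-iΔx)) / (Σ_{i=0}^{N_H-1} η_H(-iΔx))`,
reduces to pointwise evaluation: `(f *_Δ η_H)_j = f_j` for every bounded grid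
function `f`. -/
theorem stmt9 (dx H : ℝ) (hdx : 0 < dx) (hH : 0 < H) (hHdx : H ≤ dx)
    (η : ℝ → ℝ)
    (hη2 : ContDiffOn ℝ 2 η (Set.Icc (-1 : ℝ) 0))
    (hmono : MonotoneOn η (Set.Icc (-1 : ℝ) 0))
    (hη1 : η (-1) = 0)
    (hint : (∫ x in (-1 : ℝ)..0, η x) = 1)
    (hout : ∀ x, x ∉ Set.Icc (-1 : ℝ) 0 → η x = 0) :
    ⌈H / dx⌉₊ = 1 ∧
    ∀ f : ℤ → ℝ, (∃ C, ∀ j, |f j| ≤ C) → ∀ j : ℤ,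
      (∑ i ∈ Finset.range ⌈H / dx⌉₊, f (j + (i : ℤ)) * (η ((-(i : ℝ) * dx) / H) / H)) /
        (∑ i ∈ Finset.range ⌈H / dx⌉₊, η ((-(i : ℝ) * dx) / H) / H) = f j :=
  stmt9_general dx H hdx hH hHdx η hmono hη1 hint
end

section
/- Fix Δx > 0, Δt = Δx/8, and T > 0, and set M = ⌊T/Δt⌋. Let (U_{o,j})_{j∈ℤ} ⊆ [0,1] with Σ_{j∈ℤ} |U_{o,j}| < ∞, let (U^n_{o,j})_{j∈ℤ} ⊆ [0,1] be a sequence of initial grid data with Σ_{j∈ℤ} |U^n_{o,j} − U_{o,j}| → 0 as n → ∞, and let H_n > 0 with H_n → 0. For each n let ((U^n)^m_j) be the iterates of the nonlocal Eulerian–Lagrangian scheme with kernel η_{H_n} and initial data (U^n_{o,j}), and let (U^m_j) be the iterates of the local Eulerian–Lagrangian scheme with initial data (U_{o,j}). Then max_{0 ≤ m ≤ M} Δx · Σ_{j∈ℤ} |(U^n)^m_j − U^m_j| → 0 as n → ∞. -/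
open Filter

/-- One step of the Eulerian–Lagrangian scheme: given cell values `U` and
speeds `V`, with `h_j = Δx + Δt (V_{j+1} - V_j)` and
`F_j = (U_j + U_{j-1})(V_j + V_{j-1}) / h_{j-1}`, the update is
`U'_j = (U_{j-1} + 2U_j + U_{j+1})/4 + (Δt/4)(F_j - F_{j+1})`. -/
noncomputable def elStep (dx dt : ℝ) (U V : ℤ → ℝ) (j : ℤ) : ℝ :=
  (U (j - 1) + 2 * U j + U (j + 1)) / 4
    + (dt / 4) *
      ((U j + U (j - 1)) * (V j + V (j - 1)) / (dx + dt * (V j - V (j - 1)))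
        - (U (j + 1) + U j) * (V (j + 1) + V j) / (dx + dt * (V (j + 1) - V j)))

/-- The normalized discrete convolution with `η_H(x) = η(x/H)/H`, `N_H = ⌈H/Δx⌉`. -/
noncomputable def discConv (dx H : ℝ) (η : ℝ → ℝ) (f : ℤ → ℝ) (j : ℤ) : ℝ :=
  (∑ i ∈ Finset.range ⌈H / dx⌉₊, f (j + (i : ℤ)) * (η ((-(i : ℝ) * dx) / H) / H))
    / (∑ i ∈ Finset.range ⌈H / dx⌉₊, η ((-(i : ℝ) * dx) / H) / H)

/-- Iterates of the local Eulerian–Lagrangian scheme with speed `v(r) = 1 - r`. -/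
noncomputable def locIter (dx dt : ℝ) (U0 : ℤ → ℝ) : ℕ → ℤ → ℝ
  | 0 => U0
  | m + 1 => elStep dx dt (locIter dx dt U0 m) (fun j => 1 - locIter dx dt U0 m j)

/-- Iterates of the nonlocal Eulerian–Lagrangian scheme with speed
`v(r) = 1 - r` evaluated at the discrete convolution with kernel `η_H`. -/
noncomputable def nlocIter (dx dt H : ℝ) (η : ℝ → ℝ) (U0 : ℤ → ℝ) : ℕ → ℤ → ℝ
  | 0 => U0
  | m + 1 => elStep dx dt (nlocIter dx dt H η U0 m)
      (fun j => 1 - discConv dx H η (nlocIter dx dt H η U0 m) j)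

/-- Hypotheses on the kernel `η`: `C²` and non-decreasing on `[-1,0]`, vanishing
at `-1`, unit integral on `[-1,0]`, zero outside `[-1,0]`. -/
def KernelOK (η : ℝ → ℝ) : Prop :=
  ContDiffOn ℝ 2 η (Set.Icc (-1 : ℝ) 0) ∧ MonotoneOn η (Set.Icc (-1 : ℝ) 0) ∧
    η (-1) = 0 ∧ (∫ x in (-1 : ℝ)..0, η x) = 1 ∧ ∀ x, x ∉ Set.Icc (-1 : ℝ) 0 → η x = 0

/-! With `Δx` fixed, `N_H = ⌈H/Δx⌉ = 1` as soon as `H ≤ Δx`, and then the discrete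
convolution is the identity (its only weight is `η(0) > 0`), so the nonlocal scheme coincides
with the local one. The claim thus reduces to `ℓ¹`-stability of the local scheme on
`[0,1]`-valued data: with `Δt = Δx/8` one step is a three-point stencil that is Lipschitz on
`[0,1]³`, so after at most `M` steps the `ℓ¹` distance has grown by at most the factor `9^M`. -/

/-- With `Δt = Δx/8` and `V = 1 - U`, the flux term `(Δt/4) F_j` of `elStep` is
`elFlux U_{j-1} U_j / 4`, since `h_{j-1} = Δx (8 + U_{j-1} - U_j) / 8`. -/
noncomputable def elFlux (a b : ℝ) : ℝ := (a + b) * (2 - a - b) / (8 + a - b)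

noncomputable def elUpdate (a b c : ℝ) : ℝ :=
  (a + 2 * b + c) / 4 + (elFlux a b - elFlux b c) / 4

lemma elStep_eq_elUpdate {dx : ℝ} (hdx : dx ≠ 0) (U : ℤ → ℝ) (j : ℤ) :
    elStep dx (dx / 8) U (fun k => 1 - U k) j = elUpdate (U (j - 1)) (U j) (U (j + 1)) := by
  have flux : ∀ a b : ℝ, dx / 8 / 4 *
      ((b + a) * ((1 - b) + (1 - a)) / (dx + dx / 8 * ((1 - b) - (1 - a)))) = elFlux a b / 4 := by
    intro a b
    rw [show dx + dx / 8 * ((1 - b) - (1 - a)) = dx * (8 + a - b) / 8 by ring]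
    unfold elFlux
    -- no sign condition is needed: where `8 + a - b = 0` both sides are the junk value `0`
    generalize 8 + a - b = Q
    calc _ = dx / dx * ((a + b) * (2 - a - b) / Q) / 4 := by ring
      _ = _ := by rw [div_self hdx, one_mul]
  rw [elStep, mul_sub, flux, flux, elUpdate]
  ring

lemma locIter_succ {dx : ℝ} (hdx : dx ≠ 0) (U0 : ℤ → ℝ) (m : ℕ) (j : ℤ) :
    locIter dx (dx / 8) U0 (m + 1) j = elUpdate (locIter dx (dx / 8) U0 m (j - 1))
      (locIter dx (dx / 8) U0 m j) (locIter dx (dx / 8) U0 m (j + 1)) :=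
  elStep_eq_elUpdate hdx _ j

section UnitInterval

open Set

variable {a b c a' b' c' : ℝ}

lemma elFlux_bounds (ha : a ∈ Icc 0 1) (hb : b ∈ Icc 0 1) :
    0 ≤ elFlux a b ∧ elFlux a b ≤ a + b ∧ elFlux a b ≤ 2 - a - b := by
  obtain ⟨ha0, ha1⟩ := ha
  obtain ⟨hb0, hb1⟩ := hb
  have hD : 1 ≤ 8 + a - b := by linarith
  refine ⟨div_nonneg (by nlinarith) (by linarith), div_le_of_le_mul₀ (by linarith) (by linarith)
    (by nlinarith), div_le_of_le_mul₀ (by linarith) (by linarith) (by nlinarith)⟩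

lemma elUpdate_mem_Icc (ha : a ∈ Icc 0 1) (hb : b ∈ Icc 0 1) (hc : c ∈ Icc 0 1) :
    elUpdate a b c ∈ Icc 0 1 := by
  obtain ⟨hab0, -, hab2⟩ := elFlux_bounds ha hb
  obtain ⟨hbc0, hbc1, -⟩ := elFlux_bounds hb hc
  unfold elUpdate
  constructor <;> linarith [ha.1, hb.1, hb.2, hc.2]

lemma abs_elFlux_sub_le (ha : a ∈ Icc 0 1) (hb : b ∈ Icc 0 1) (ha' : a' ∈ Icc 0 1)
    (hb' : b' ∈ Icc 0 1) : |elFlux a b - elFlux a' b'| ≤ |a - a'| + |b - b'| := by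
  obtain ⟨ha0, ha1⟩ := ha
  obtain ⟨hb0, hb1⟩ := hb
  obtain ⟨ha0', ha1'⟩ := ha'
  obtain ⟨hb0', hb1'⟩ := hb'
  set s := |a - a'| + |b - b'|
  set φ := (a + b) * (2 - a - b)
  set φ' := (a' + b') * (2 - a' - b')
  set D := 8 + a - b
  set D' := 8 + a' - b'
  have hD : 7 ≤ D := by linarith
  have hD' : 7 ≤ D' := by linarith
  have hφ : |φ - φ'| ≤ 2 * s := by
    rw [show φ - φ' = ((a - a') + (b - b')) * (2 - a - b - a' - b') by ring, abs_mul]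
    have : |2 - a - b - a' - b'| ≤ 2 := abs_le.mpr ⟨by linarith, by linarith⟩
    nlinarith [abs_add_le (a - a') (b - b'), abs_nonneg (2 - a - b - a' - b'),
      abs_nonneg (a - a' + (b - b'))]
  have hφ' : |φ'| ≤ 1 := abs_le.mpr ⟨by nlinarith, by nlinarith [sq_nonneg (a' + b' - 1)]⟩
  have hDD : |D' - D| ≤ s := by
    rw [show D' - D = -(a - a') + (b - b') by ring]
    exact (abs_add_le _ _).trans_eq (by rw [abs_neg])
  have split : elFlux a b - elFlux a' b' = (φ - φ') / D + φ' * (D' - D) / (D * D') := by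
    rw [show elFlux a b = φ / D from rfl, show elFlux a' b' = φ' / D' from rfl]
    field_simp
    ring
  calc |elFlux a b - elFlux a' b'| ≤ |φ - φ'| / D + |φ'| * |D' - D| / (D * D') := by
        rw [split]
        refine (abs_add_le _ _).trans_eq ?_
        rw [abs_div, abs_div, abs_mul, abs_of_pos (by positivity : 0 < D),
          abs_of_pos (by positivity : 0 < D * D')]
    _ ≤ 2 * s / 7 + 1 * s / (7 * 7) := by gcongr
    _ ≤ s := by linarith [abs_nonneg (a - a'), abs_nonneg (b - b')]

lemma abs_elUpdate_sub_le (ha : a ∈ Icc 0 1) (hb : b ∈ Icc 0 1) (hc : c ∈ Icc 0 1)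
    (ha' : a' ∈ Icc 0 1) (hb' : b' ∈ Icc 0 1) (hc' : c' ∈ Icc 0 1) :
    |elUpdate a b c - elUpdate a' b' c'| ≤ 3 * (|a - a'| + |b - b'| + |c - c'|) := by
  have hab := abs_le.mp (abs_elFlux_sub_le ha hb ha' hb')
  have hbc := abs_le.mp (abs_elFlux_sub_le hb hc hb' hc')
  unfold elUpdate
  rw [abs_le]
  constructor <;> linarith [le_abs_self (a - a'), neg_abs_le (a - a'), le_abs_self (b - b'),
    neg_abs_le (b - b'), le_abs_self (c - c'), neg_abs_le (c - c')]

end UnitInterval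

lemma summable_abs_and_tsum_le_of_le_three_point {u f : ℤ → ℝ} {L : ℝ} (hf : Summable f)
    (hu : ∀ j, |u j| ≤ L * (f (j - 1) + f j + f (j + 1))) :
    Summable (fun j => |u j|) ∧ ∑' j, |u j| ≤ 3 * L * ∑' j, f j := by
  have hf_pred : Summable (fun j => f (j - 1)) := (Equiv.subRight (1 : ℤ)).summable_iff.mpr hf
  have hf_succ : Summable (fun j => f (j + 1)) := (Equiv.addRight (1 : ℤ)).summable_iff.mpr hf
  have hg : Summable (fun j => L * (f (j - 1) + f j + f (j + 1))) :=
    ((hf_pred.add hf).add hf_succ).mul_left L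
  have hsum : Summable (fun j => |u j|) := hg.of_nonneg_of_le (fun _ => abs_nonneg _) hu
  refine ⟨hsum, (hsum.tsum_le_tsum hu hg).trans_eq ?_⟩
  have shift_pred : ∑' j, f (j - 1) = ∑' j, f j := (Equiv.subRight (1 : ℤ)).tsum_eq f
  have shift_succ : ∑' j, f (j + 1) = ∑' j, f j := (Equiv.addRight (1 : ℤ)).tsum_eq f
  rw [tsum_mul_left, (hf_pred.add hf).tsum_add hf_succ, hf_pred.tsum_add hf, shift_pred,
    shift_succ]
  ring

section LocalScheme

variable {dx : ℝ}

lemma locIter_mem_Icc (hdx : dx ≠ 0) {U0 : ℤ → ℝ} (hU0 : ∀ j, U0 j ∈ Set.Icc 0 1)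
    (m : ℕ) (j : ℤ) :
    locIter dx (dx / 8) U0 m j ∈ Set.Icc 0 1 := by
  induction m generalizing j with
  | zero => exact hU0 j
  | succ m ih => exact locIter_succ hdx U0 m j ▸ elUpdate_mem_Icc (ih _) (ih _) (ih _)

lemma locIter_l1_stable (hdx : dx ≠ 0) {U W : ℤ → ℝ} (hU : ∀ j, U j ∈ Set.Icc 0 1)
    (hW : ∀ j, W j ∈ Set.Icc 0 1) (hUW : Summable fun j => |U j - W j|) (m : ℕ) :
    Summable (fun j => |locIter dx (dx / 8) U m j - locIter dx (dx / 8) W m j|) ∧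
      ∑' j, |locIter dx (dx / 8) U m j - locIter dx (dx / 8) W m j|
        ≤ 9 ^ m * ∑' j, |U j - W j| := by
  induction m with
  | zero => exact ⟨hUW, by simp [locIter]⟩
  | succ m ih =>
    have hU' := locIter_mem_Icc hdx hU m
    have hW' := locIter_mem_Icc hdx hW m
    obtain ⟨hsum, hle⟩ := summable_abs_and_tsum_le_of_le_three_point (L := 3)
      (u := fun j => locIter dx (dx / 8) U (m + 1) j - locIter dx (dx / 8) W (m + 1) j) ih.1
      fun j => by
        rw [locIter_succ hdx, locIter_succ hdx]
        exact abs_elUpdate_sub_le (hU' _) (hU' _) (hU' _) (hW' _) (hW' _) (hW' _)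
    refine ⟨hsum, hle.trans ?_⟩
    rw [pow_succ']
    nlinarith [ih.2]

end LocalScheme

lemma KernelOK.apply_zero_pos {η : ℝ → ℝ} (hη : KernelOK η) : 0 < η 0 := by
  obtain ⟨-, hmono, hη_neg_one, hint, -⟩ := hη
  by_contra! h
  have hzero : ∀ x ∈ Set.uIcc (-1 : ℝ) 0, η x = 0 := by
    rw [Set.uIcc_of_le (by norm_num)]
    intro x hx
    exact le_antisymm ((hmono hx ⟨by norm_num, le_rfl⟩ hx.2).trans h)
      (hη_neg_one ▸ hmono ⟨le_rfl, by norm_num⟩ hx hx.1)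
  simp [intervalIntegral.integral_congr hzero] at hint

lemma discConv_eq_self_of_le {dx H : ℝ} {η : ℝ → ℝ} (hH : 0 < H) (hHdx : H ≤ dx)
    (hη0 : η 0 ≠ 0) (f : ℤ → ℝ) (j : ℤ) : discConv dx H η f j = f j := by
  have hdx : 0 < dx := hH.trans_le hHdx
  have hN : ⌈H / dx⌉₊ = 1 :=
    le_antisymm (Nat.ceil_le.mpr (by exact_mod_cast (div_le_one hdx).mpr hHdx))
      (Nat.one_le_ceil_iff.mpr (div_pos hH hdx))
  simp only [discConv, hN, Finset.sum_range_one, Nat.cast_zero, neg_zero, zero_mul, zero_div,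
    add_zero]
  exact mul_div_cancel_right₀ _ (div_ne_zero hη0 hH.ne')

lemma nlocIter_eq_locIter_of_le {dx dt H : ℝ} {η : ℝ → ℝ} (hH : 0 < H) (hHdx : H ≤ dx)
    (hη0 : η 0 ≠ 0) (U0 : ℤ → ℝ) : nlocIter dx dt H η U0 = locIter dx dt U0 := by
  funext m
  induction m with
  | zero => rfl
  | succ m ih => simp only [nlocIter, locIter, ih, discConv_eq_self_of_le hH hHdx hη0]

theorem stmt11_general (dx T : ℝ) (hdx : 0 < dx)
    (Uo : ℤ → ℝ) (hUo : ∀ j, Uo j ∈ Set.Icc (0 : ℝ) 1)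
    (Un : ℕ → ℤ → ℝ) (hUn : ∀ n j, Un n j ∈ Set.Icc (0 : ℝ) 1)
    (hUnsum : ∀ n, Summable fun j => |Un n j - Uo j|)
    (hconv : Tendsto (fun n => ∑' j : ℤ, |Un n j - Uo j|) atTop (nhds 0))
    (Hn : ℕ → ℝ) (hHn : ∀ n, 0 < Hn n) (hHn0 : Tendsto Hn atTop (nhds 0))
    (η : ℝ → ℝ) (hη : KernelOK η) :
    Tendsto (fun n =>
        (Finset.range (⌊T / (dx / 8)⌋₊ + 1)).sup' Finset.nonempty_range_add_one
          (fun m => dx * ∑' j : ℤ,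
            |nlocIter dx (dx / 8) (Hn n) η (Un n) m j - locIter dx (dx / 8) Uo m j|))
      atTop (nhds 0) := by
  set M := ⌊T / (dx / 8)⌋₊
  have hlim : Tendsto (fun n => dx * 9 ^ M * ∑' j : ℤ, |Un n j - Uo j|) atTop (nhds 0) := by
    simpa using hconv.const_mul (dx * 9 ^ M)
  refine squeeze_zero' (Eventually.of_forall fun n => ?_) ?_ hlim
  · exact Finset.le_sup'_of_le _ (Finset.mem_range.mpr M.succ_pos)
      (mul_nonneg hdx.le (tsum_nonneg fun _ => abs_nonneg _))
  filter_upwards [hHn0.eventually_le_const hdx] with n hn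
  rw [nlocIter_eq_locIter_of_le (hHn n) hn hη.apply_zero_pos.ne']
  refine Finset.sup'_le _ _ fun m hm => ?_
  have hmM : m ≤ M := Nat.lt_succ_iff.mp (Finset.mem_range.mp hm)
  rw [mul_assoc]
  gcongr
  calc _ ≤ 9 ^ m * ∑' j, |Un n j - Uo j| :=
        (locIter_l1_stable hdx.ne' (hUn n) hUo (hUnsum n) m).2
    _ ≤ 9 ^ M * ∑' j, |Un n j - Uo j| := by gcongr; norm_num

/-- Discrete nonlocal-to-local limit for the
Eulerian–Lagrangian scheme: if the initial grid data `Uⁿ_o → U_o` in `ℓ¹` and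
`H_n → 0`, then `max_{0 ≤ m ≤ M} Δx Σ_j |(Uⁿ)^m_j - U^m_j| → 0`, where
`M = ⌊T/Δt⌋` and `Δt = Δx/8`. -/
theorem stmt11 (dx T : ℝ) (hdx : 0 < dx) (hT : 0 < T)
    (Uo : ℤ → ℝ) (hUo : ∀ j, Uo j ∈ Set.Icc (0 : ℝ) 1)
    (hUosum : Summable fun j => |Uo j|)
    (Un : ℕ → ℤ → ℝ) (hUn : ∀ n j, Un n j ∈ Set.Icc (0 : ℝ) 1)
    (hUnsum : ∀ n, Summable fun j => |Un n j - Uo j|)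
    (hconv : Tendsto (fun n => ∑' j : ℤ, |Un n j - Uo j|) atTop (nhds 0))
    (Hn : ℕ → ℝ) (hHn : ∀ n, 0 < Hn n) (hHn0 : Tendsto Hn atTop (nhds 0))
    (η : ℝ → ℝ) (hη : KernelOK η) :
    Tendsto (fun n =>
        (Finset.range (⌊T / (dx / 8)⌋₊ + 1)).sup' Finset.nonempty_range_add_one
          (fun m => dx * ∑' j : ℤ,
            |nlocIter dx (dx / 8) (Hn n) η (Un n) m j - locIter dx (dx / 8) Uo m j|))
      atTop (nhds 0) :=
  stmt11_general dx T hdx Uo hUo Un hUn hUnsum hconv Hn hHn hHn0 η hη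
end

section
/- Fix t > 0, and for ε ∈ (0, 1/2) define u, u_ε : ℝ → ℝ by u(x) = 1/2 if x > t/2 and 0 otherwise, and u_ε(x) = 1/2 + ε if x > (1/2 − ε)t and 0 otherwise. Then for every continuous compactly supported function ψ : ℝ → ℝ, lim_{ε → 0⁺} ∫_ℝ ( (u_ε(x) − u(x))/ε ) ψ(x) dx = ∫_{t/2}^{+∞} ψ(x) dx + (t/2)·ψ(t/2). In particular, the difference quotients (u_ε − u)/ε converge weakly-* in the sense of measures to the sum of the Heaviside function H(· − t/2) (as a density) and a point mass of weight t/2 at x = t/2, and not to any locally integrable function. -/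
/-!
Tested against `ψ`, the difference quotient of the two profiles is `ψ` on `(t/2, ∞)` plus
`(1/2 + ε)/ε` times `ψ` on the sliver `((1/2 - ε)t, t/2]` swept out between the two shocks.
The first part is independent of `ε`; in the second, `(1/ε) ∫` over a sliver of width `εt` at
`t/2` tends to `t ψ(t/2)` by the fundamental theorem of calculus, which produces the Dirac mass
of weight `t/2`.
-/

open MeasureTheory Filter Set Topology

theorem tendsto_intervalIntegral_sub_mul_div {ψ : ℝ → ℝ} (hψ : Continuous ψ) (a c : ℝ) :
    Tendsto (fun ε => (∫ x in (a - ε * c)..a, ψ x) / ε) (𝓝[≠] 0) (𝓝 (c * ψ a)) := by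
  have hF : HasDerivAt (fun u => ∫ x in a..u, ψ x) (ψ a) (a - 0 * c) := by
    simpa using (hψ.integral_hasStrictDerivAt a a).hasDerivAt
  have hG : HasDerivAt (fun ε => -∫ x in a..(a - ε * c), ψ x) (c * ψ a) 0 := by
    simpa [mul_comm c] using (hF.comp 0 ((hasDerivAt_mul_const c).const_sub a)).fun_neg
  refine hG.tendsto_slope_zero.congr fun ε => ?_
  simp [intervalIntegral.integral_symm a, div_eq_inv_mul]

theorem integral_ite_gt_sub_ite_gt_div_mul {ψ : ℝ → ℝ} (hψ : Integrable ψ) (a b c : ℝ)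
    {ε : ℝ} (hε : ε ≠ 0) :
    ∫ x, ((if x > b then c + ε else 0) - (if x > a then c else 0)) / ε * ψ x
      = (∫ x in Ioi a, ψ x) + (c + ε) * ((∫ x in b..a, ψ x) / ε) := by
  have hsplit : ∀ x, ((if x > b then c + ε else 0) - (if x > a then c else 0)) / ε * ψ x
      = (c + ε) / ε * (Ioi b).indicator ψ x - c / ε * (Ioi a).indicator ψ x := by
    intro x
    simp only [indicator_apply, mem_Ioi, gt_iff_lt]
    split_ifs <;> ring
  have hIoi := intervalIntegral.integral_interval_add_Ioi (hψ.integrableOn (s := Ioi b))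
    (hψ.integrableOn (s := Ioi a))
  simp_rw [hsplit]
  rw [integral_sub ((hψ.indicator measurableSet_Ioi).const_mul _)
      ((hψ.indicator measurableSet_Ioi).const_mul _), integral_const_mul, integral_const_mul,
    integral_indicator measurableSet_Ioi, integral_indicator measurableSet_Ioi, ← hIoi]
  field_simp
  ring

theorem stmt17_general (t : ℝ)
    (ψ : ℝ → ℝ) (hψ : Continuous ψ) (hψc : HasCompactSupport ψ) :
    Tendsto (fun ε : ℝ =>
        ∫ x : ℝ,
          (((if x > (1 / 2 - ε) * t then 1 / 2 + ε else 0)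
              - (if x > t / 2 then (1 : ℝ) / 2 else 0)) / ε) * ψ x)
      (nhdsWithin 0 (Set.Ioo (0 : ℝ) (1 / 2)))
      (nhds ((∫ x in Set.Ioi (t / 2), ψ x) + (t / 2) * ψ (t / 2))) := by
  have hfilter : 𝓝[Ioo 0 (1 / 2)] (0 : ℝ) ≤ 𝓝[≠] 0 := nhdsWithin_mono _ fun ε hε => hε.1.ne'
  have hmean := (tendsto_intervalIntegral_sub_mul_div hψ (t / 2) t).mono_left hfilter
  have hspeed : Tendsto (fun ε : ℝ => 1 / 2 + ε) (𝓝[Ioo 0 (1 / 2)] 0) (𝓝 (1 / 2)) :=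
    ((continuous_const_add _).tendsto' 0 _ (add_zero _)).mono_left nhdsWithin_le_nhds
  have hlim := tendsto_const_nhds (x := ∫ x in Ioi (t / 2), ψ x) |>.add (hspeed.mul hmean)
  rw [show 1 / 2 * (t * ψ (t / 2)) = t / 2 * ψ (t / 2) by ring] at hlim
  refine hlim.congr' ?_
  filter_upwards [self_mem_nhdsWithin] with ε hε
  rw [integral_ite_gt_sub_ite_gt_div_mul (hψ.integrable_of_hasCompactSupport hψc) _ _ _ hε.1.ne',
    show (1 / 2 - ε) * t = t / 2 - ε * t by ring]

/-- For fixed `t > 0`, let `u = (1/2)·χ_{x > t/2}` and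
`u_ε = (1/2 + ε)·χ_{x > (1/2 - ε)t}` (the profiles at time `t` of the entropy
solutions with initial data `(1/2)χ_{[0,∞)}` and `(1/2+ε)χ_{[0,∞)}`). Then for
every continuous compactly supported `ψ`,
`∫ ((u_ε - u)/ε) ψ → ∫_{t/2}^∞ ψ + (t/2) ψ(t/2)` as `ε → 0⁺`, i.e. the
difference quotients converge weakly-* to `H(· - t/2) + (t/2) δ_{t/2}`. -/
theorem stmt17 (t : ℝ) (ht : 0 < t)
    (ψ : ℝ → ℝ) (hψ : Continuous ψ) (hψc : HasCompactSupport ψ) :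
    Tendsto (fun ε : ℝ =>
        ∫ x : ℝ,
          (((if x > (1 / 2 - ε) * t then 1 / 2 + ε else 0)
              - (if x > t / 2 then (1 : ℝ) / 2 else 0)) / ε) * ψ x)
      (nhdsWithin 0 (Set.Ioo (0 : ℝ) (1 / 2)))
      (nhds ((∫ x in Set.Ioi (t / 2), ψ x) + (t / 2) * ψ (t / 2))) :=
  stmt17_general t ψ hψ hψc
end
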